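/- Let (g,h,φ) be a pre-Lie-morphism triple over a field K of characteristic 0. Let (ω,ϖ,θ) and (ω',ϖ',θ') generate 1-parameter infinitesimal deformations with deformed structures x ·_t y = x·_g y + tω(x,y), u ∗_t v = u·_h v + tϖ(u,v), φ_t = φ + tθ, and similarly ·'_t, ∗'_t, φ'_t. Suppose N: g → g and S: h → h are linear maps such that for every t ∈ K: (Id_g + tN)(x ·_t y) = (Id_g + tN)(x) ·'_t (Id_g + tN)(y) for all x,y ∈ g, (Id_h + tS)(u ∗_t v) = (Id_h + tS)(u) ∗'_t (Id_h + tS)(v) for all u,v ∈ h, and φ'_t((Id_g + tN)(x)) = (Id_h + tS)(φ_t(x)) for all x ∈ g. Then ω(x,y) − ω'(x,y) = x·_g N(y) + N(x)·_g y − N(x·_g y), ϖ(u,v) − ϖ'(u,v) = u·_h S(v) + S(u)·_h v − S(u·_h v), and θ − θ' = φ∘N − S∘φ; moreover Nω(x,y) = ω'(x,N(y)) + ω'(N(x),y) + N(x)·_g N(y), ω'(N(x),N(y)) = 0, Sϖ(u,v) = ϖ'(u,S(v)) + ϖ'(S(u),v) + S(u)·_h S(v), ϖ'(S(u),S(v))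 = 0, and θ'∘N = S∘θ. -/
import Mathlib


/-- A binary product satisfies the pre-Lie identity. -/
def PreLieOn {g : Type*} [AddCommGroup g] (p : g → g → g) : Prop :=
  ∀ x y z : g, p (p x y) z - p x (p y z) = p (p y x) z - p y (p x z)

/-- The `t`-deformed product `x ·_t y = x·y + t • ω(x,y)`. -/
def tProd {K g : Type*} [Field K] [AddCommGroup g] [Module K g]
    (mul ω : g → g → g) (t : K) (x y : g) : g :=
  mul x y + t • ω x y

/-- The data `(ω, ϖ, θ)` generates a 1-parameter infinitesimal deformation of the
pre-Lie-morphism triple `(g, h, φ)`. -/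
def GeneratesDeformation {K g h : Type*} [Field K] [AddCommGroup g] [Module K g]
    [AddCommGroup h] [Module K h]
    (mulg : g →ₗ[K] g →ₗ[K] g) (mulh : h →ₗ[K] h →ₗ[K] h) (φ : g →ₗ[K] h)
    (ω : g →ₗ[K] g →ₗ[K] g) (ϖ : h →ₗ[K] h →ₗ[K] h) (θ : g →ₗ[K] h) : Prop :=
  ∀ t : K,
    PreLieOn (tProd (fun a b => mulg a b) (fun a b => ω a b) t) ∧
    PreLieOn (tProd (fun a b => mulh a b) (fun a b => ϖ a b) t) ∧
    (∀ x y : g,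
      (φ (tProd (fun a b => mulg a b) (fun a b => ω a b) t x y)
        + t • θ (tProd (fun a b => mulg a b) (fun a b => ω a b) t x y))
        + t ^ 3 • ϖ (θ x) (θ y)
      = tProd (fun a b => mulh a b) (fun a b => ϖ a b) t (φ x + t • θ x) (φ y + t • θ y))

lemma cube_coeffs {K V : Type*} [Field K] [CharZero K] [AddCommGroup V] [Module K V]
    (b c d : V) (H : ∀ t : K, t • b + t ^ 2 • c + t ^ 3 • d = 0) :
    b = 0 ∧ c = 0 ∧ d = 0 := by
  have h1 := H 1
  have hm := H (-1)
  have h2 := H 2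
  simp only [one_pow, one_smul] at h1
  have hc : (2 : K) • c = 0 := by
    linear_combination (norm := module) h1 + hm
  have hc0 : c = 0 := by
    rcases smul_eq_zero.mp hc with h | h
    · exact absurd h two_ne_zero
    · exact h
  have hd : (6 : K) • d = 0 := by
    linear_combination (norm := module) h2 - (2 : K) • h1 - hc
  have hd0 : d = 0 := by
    rcases smul_eq_zero.mp hd with h | h
    · exact absurd h (by norm_num)
    · exact h
  have hb0 : b = 0 := by
    rw [hc0, hd0] at h1; simpa using h1
  exact ⟨hb0, hc0, hd0⟩

/-- If two 1-parameter infinitesimal deformations of a pre-Lie-morphism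
triple, generated by `(ω,ϖ,θ)` and `(ω',ϖ',θ')`, are equivalent via `Id + tN`, `Id + tS`,
then the eight relating identities hold; in particular
`(ω,ϖ,θ) − (ω',ϖ',θ') = δ(N,S,0)`. -/
theorem equivalent_deformations_relations {K : Type*} [Field K] [CharZero K]
    {g h : Type*} [AddCommGroup g] [Module K g] [AddCommGroup h] [Module K h]
    (mulg : g →ₗ[K] g →ₗ[K] g) (mulh : h →ₗ[K] h →ₗ[K] h)
    (hg : PreLieOn fun x y => mulg x y) (hh : PreLieOn fun u v => mulh u v)
    (φ : g →ₗ[K] h) (hφ : ∀ x y : g, φ (mulg x y) = mulh (φ x) (φ y))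
    (ω ω' : g →ₗ[K] g →ₗ[K] g) (ϖ ϖ' : h →ₗ[K] h →ₗ[K] h) (θ θ' : g →ₗ[K] h)
    (hdef : GeneratesDeformation mulg mulh φ ω ϖ θ)
    (hdef' : GeneratesDeformation mulg mulh φ ω' ϖ' θ')
    (N : g →ₗ[K] g) (S : h →ₗ[K] h)
    (hNg : ∀ (t : K) (x y : g),
      tProd (fun a b => mulg a b) (fun a b => ω a b) t x y
        + t • N (tProd (fun a b => mulg a b) (fun a b => ω a b) t x y)
      = tProd (fun a b => mulg a b) (fun a b => ω' a b) t (x + t • N x) (y + t • N y))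
    (hSh : ∀ (t : K) (u v : h),
      tProd (fun a b => mulh a b) (fun a b => ϖ a b) t u v
        + t • S (tProd (fun a b => mulh a b) (fun a b => ϖ a b) t u v)
      = tProd (fun a b => mulh a b) (fun a b => ϖ' a b) t (u + t • S u) (v + t • S v))
    (hφt : ∀ (t : K) (x : g),
      φ (x + t • N x) + t • θ' (x + t • N x)
        = (φ x + t • θ x) + t • S (φ x + t • θ x)) :
    (∀ x y : g, ω x y - ω' x y = mulg x (N y) + mulg (N x) y - N (mulg x y)) ∧
    (∀ x y : g, N (ω x y) = ω' x (N y) + ω' (N x) y + mulg (N x) (N y)) ∧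
    (∀ x y : g, ω' (N x) (N y) = 0) ∧
    (∀ u v : h, ϖ u v - ϖ' u v = mulh u (S v) + mulh (S u) v - S (mulh u v)) ∧
    (∀ u v : h, S (ϖ u v) = ϖ' u (S v) + ϖ' (S u) v + mulh (S u) (S v)) ∧
    (∀ u v : h, ϖ' (S u) (S v) = 0) ∧
    (∀ x : g, θ x - θ' x = φ (N x) - S (φ x)) ∧
    (∀ x : g, θ' (N x) = S (θ x)) := by
  classical
  have keyG : ∀ x y : g,
      (ω x y + N (mulg x y) - (mulg x (N y) + mulg (N x) y + ω' x y) = 0) ∧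
      (N (ω x y) - (mulg (N x) (N y) + ω' x (N y) + ω' (N x) y) = 0) ∧
      (-(ω' (N x) (N y)) = 0) := by
    intro x y
    apply cube_coeffs (K := K)
    intro t
    have h := hNg t x y
    simp only [tProd, map_add, map_smul, LinearMap.add_apply, LinearMap.smul_apply] at h
    linear_combination (norm := module) h
  have keyH : ∀ u v : h,
      (ϖ u v + S (mulh u v) - (mulh u (S v) + mulh (S u) v + ϖ' u v) = 0) ∧
      (S (ϖ u v) - (mulh (S u) (S v) + ϖ' u (S v) + ϖ' (S u) v) = 0) ∧
      (-(ϖ' (S u) (S v)) = 0) := by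
    intro u v
    apply cube_coeffs (K := K)
    intro t
    have h := hSh t u v
    simp only [tProd, map_add, map_smul, LinearMap.add_apply, LinearMap.smul_apply] at h
    linear_combination (norm := module) h
  have keyP : ∀ x : g,
      (φ (N x) + θ' x - (θ x + S (φ x)) = 0) ∧
      (θ' (N x) - S (θ x) = 0) ∧ ((0 : h) = 0) := by
    intro x
    apply cube_coeffs (K := K)
    intro t
    have h := hφt t x
    simp only [map_add, map_smul] at h
    linear_combination (norm := module) h
  refine ⟨?_, ?_, ?_, ?_, ?_, ?_, ?_, ?_⟩
  · intro x y
    have h := (keyG x y).1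
    linear_combination (norm := module) h
  · intro x y
    have h := (keyG x y).2.1
    linear_combination (norm := module) h
  · intro x y
    have h := (keyG x y).2.2
    linear_combination (norm := module) -h
  · intro u v
    have h := (keyH u v).1
    linear_combination (norm := module) h
  · intro u v
    have h := (keyH u v).2.1
    linear_combination (norm := module) h
  · intro u v
    have h := (keyH u v).2.2
    linear_combination (norm := module) -h
  · intro x
    have h := (keyP x).1
    linear_combination (norm := module) -h
  · intro x
    have h := (keyP x).2.1
    linear_combination (norm := module) h
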